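/- Let (k_n)_{n≥1} be a sequence of positive integers with partial sums s_n = k_1 + ⋯ + k_n (s_0 = 0), and for each index i ≥ 1 let b(i) be the unique n with s_{n−1} < i ≤ s_n. Then the following are equivalent: (1) for all positive integers i, j with i ≤ 3j and j ≤ 3i one has |b(i) − b(j)| ≤ 1 (i.e., the block tridiagonal form with central block sizes k_n covers all support entries of the staircase form with row and column support lengths 3n); (2) for all n ≥ 1, k_{n+1} ≥ 2·(k_1 + ⋯ + k_n). In particular, (2) holds with equality when k_1 = 1 and k_n = 2·3^{n−2} for n ≥ 2. -/

import Mathlib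

/-!
The block index `b = blockIdx k` is the lower adjoint of the partial sums `s = psum k`, so it is
monotone and `b i ≤ n ↔ i ≤ s n`. Hence the staircase is covered iff `b (3j) ≤ b j + 1` for all
`j`, i.e. iff `3 s m ≤ s (m + 1)` for every block index `m`, which is `2 s m ≤ k (m + 1)`.
-/

/-- Partial sums `s n = k 1 + ⋯ + k n` of a sequence of block sizes (with `s 0 = 0`). -/
def psum (k : ℕ → ℕ) (n : ℕ) : ℕ := ∑ j ∈ Finset.Icc 1 n, k j

/-- The block index `b i` of an index `i ≥ 1`: the unique `n` with `s (n-1) < i ≤ s n`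
(realized as the least `n` with `i ≤ s n`). -/
noncomputable def blockIdx (k : ℕ → ℕ) (i : ℕ) : ℕ := sInf {n | i ≤ psum k n}

section

variable {k : ℕ → ℕ}

lemma psum_zero : psum k 0 = 0 := by simp [psum]

lemma psum_succ (n : ℕ) : psum k (n + 1) = psum k n + k (n + 1) := by
  rw [psum, psum, Finset.sum_Icc_succ_top (by omega)]

lemma psum_mono : Monotone (psum k) := fun _ _ h =>
  Finset.sum_le_sum_of_subset (Finset.Icc_subset_Icc_right h)

lemma le_psum_self (hk : ∀ n, 1 ≤ n → 1 ≤ k n) (n : ℕ) : n ≤ psum k n := by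
  induction n with
  | zero => simp
  | succ m ih => have := hk (m + 1) (by omega); rw [psum_succ]; omega

lemma gc_blockIdx_psum (hk : ∀ n, 1 ≤ n → 1 ≤ k n) : GaloisConnection (blockIdx k) (psum k) := by
  intro i n
  refine ⟨fun h => ?_, fun h => Nat.sInf_le h⟩
  have hmem : i ≤ psum k (blockIdx k i) :=
    Nat.sInf_mem (⟨i, le_psum_self hk i⟩ : {n | i ≤ psum k n}.Nonempty)
  exact hmem.trans (psum_mono h)

lemma one_le_blockIdx (hk : ∀ n, 1 ≤ n → 1 ≤ k n) {i : ℕ} (hi : 1 ≤ i) : 1 ≤ blockIdx k i := by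
  rw [Nat.one_le_iff_ne_zero, Ne, ← Nat.le_zero, (gc_blockIdx_psum hk).le_iff_le, psum_zero]
  omega

def CoversStaircase (k : ℕ → ℕ) : Prop :=
  ∀ i j : ℕ, 1 ≤ i → 1 ≤ j → i ≤ 3 * j → j ≤ 3 * i →
    |(blockIdx k i : ℤ) - (blockIdx k j : ℤ)| ≤ 1

/-- By monotonicity of `blockIdx k`, only the extreme entries `(3j, j)` of the support matter. -/
lemma coversStaircase_iff (hk : ∀ n, 1 ≤ n → 1 ≤ k n) :
    CoversStaircase k ↔ ∀ j, 1 ≤ j → blockIdx k (3 * j) ≤ blockIdx k j + 1 := by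
  constructor
  · intro H j hj
    have := abs_le.1 (H (3 * j) j (by omega) hj le_rfl (by omega))
    omega
  · intro H i j hi hj hij hji
    have hi' := ((gc_blockIdx_psum hk).monotone_l hij).trans (H j hj)
    have hj' := ((gc_blockIdx_psum hk).monotone_l hji).trans (H i hi)
    rw [abs_le]
    omega

lemma forall_blockIdx_three_mul_le_iff (hk : ∀ n, 1 ≤ n → 1 ≤ k n) :
    (∀ j, 1 ≤ j → blockIdx k (3 * j) ≤ blockIdx k j + 1) ↔
      ∀ n, 1 ≤ n → 2 * psum k n ≤ k (n + 1) := by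
  have gc := gc_blockIdx_psum hk
  constructor
  · intro H n hn
    have hjn : blockIdx k (psum k n) ≤ n := gc.l_u_le n
    have h3 : 3 * psum k n ≤ psum k (n + 1) :=
      gc.le_iff_le.1 ((H _ (hn.trans (le_psum_self hk n))).trans (by omega))
    rw [psum_succ] at h3
    omega
  · intro H j hj
    set m := blockIdx k j
    have hjm : j ≤ psum k m := gc.le_u_l j
    have hgrowth := H m (one_le_blockIdx hk hj)
    rw [gc.le_iff_le, psum_succ]
    omega

lemma psum_succ_eq_three_pow (h1 : k 1 = 1) (h2 : ∀ n, 2 ≤ n → k n = 2 * 3 ^ (n - 2)) (n : ℕ) :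
    psum k (n + 1) = 3 ^ n := by
  induction n with
  | zero => simp [psum, h1]
  | succ m ih =>
    rw [psum_succ, ih, h2 (m + 2) (by omega), Nat.add_sub_cancel, pow_succ]
    ring

end

/-- The block tridiagonal partition with central block sizes `k n` covers
all support entries of the staircase form with row and column support lengths `3n` (i.e.
`|b i - b j| ≤ 1` whenever `i ≤ 3j` and `j ≤ 3i`) if and only if `k (n+1) ≥ 2 (k 1 + ⋯ + k n)`
for all `n ≥ 1`.  In particular, equality holds when `k 1 = 1` and `k n = 2 * 3^(n-2)` for
`n ≥ 2`. -/
theorem blockTridiagonal_covers_staircase_iff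
    (k : ℕ → ℕ) (hk : ∀ n, 1 ≤ n → 1 ≤ k n) :
    ((∀ i j : ℕ, 1 ≤ i → 1 ≤ j → i ≤ 3 * j → j ≤ 3 * i →
        |(blockIdx k i : ℤ) - (blockIdx k j : ℤ)| ≤ 1) ↔
      (∀ n, 1 ≤ n → 2 * psum k n ≤ k (n + 1))) ∧
    ((k 1 = 1 ∧ ∀ n, 2 ≤ n → k n = 2 * 3 ^ (n - 2)) →
      ∀ n, 1 ≤ n → k (n + 1) = 2 * psum k n) := by
  refine ⟨(coversStaircase_iff hk).trans (forall_blockIdx_three_mul_le_iff hk), ?_⟩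
  rintro ⟨h1, h2⟩ n hn
  obtain ⟨m, rfl⟩ := Nat.exists_eq_add_of_le' hn
  rw [psum_succ_eq_three_pow h1 h2, h2 _ (by omega)]
  rfl
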